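/- arXiv:0709.1184 — 4 statements merged into one kernel-verified Lean document; each statement's English description precedes it below -/
import Mathlib

section
/- If f : ℝ → ℝ is continuous and has a periodic orbit of period m+n of type L(m,n) with m,n ≥ 2, then for every N ≥ m+n, f has a periodic point of period N. (Consequence of the forcing L(m,n) → L(m,n+1) iterated, each L-type orbit having period equal to the sum of parameters.) -/
/-!
Write `J = [x n, x 0]` and `K p = [x (p + 1), x p]` for `n ≤ p ≤ m + n - 2`. As
`f (x 0) = x 1 > x 0` and `f (x n) = x (n + 1)`, the image `f J` covers `J` and `K n`; `f (K p)`
covers `K (p + 1)`, and `f (K (m + n - 2))` covers `[x (m + n - 1), x 0] ⊇ J`. For every `r ≥ 1`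
the loop `J, …, J, K n, …, K (m + n - 2)` (with `r` copies of `J`) has length `N = r + m - 1`, and
pulling intervals back along it gives a fixed point `y` of `f^[N]` with this itinerary. All
intervals of the loop but the last lie above `c = x (m + n - 2)` and the last lies below it, so
`f^[j] y = y` with `0 < j < N` would force `f^[N - 1] y = f^[j - 1] y = c`, i.e.
`y = f c = x (m + n - 1) < x n`, contradicting `y ∈ J`.
-/

open Set Function

theorem Function.iterate_ne_self_of_le_of_iterate_le {α : Type*} [PartialOrder α] {f : α → α}
    {y c : α} {k : ℕ} (hy : f^[k + 1] y = y) (hlow : ∀ t < k, c ≤ f^[t] y)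
    (hlast : f^[k] y ≤ c) (hc : f c ≠ y) : ∀ j, 0 < j → j < k + 1 → f^[j] y ≠ y := by
  intro j hj hjk hfj
  have hback : f^[k] y = f^[j - 1] y := calc
    f^[k] y = f^[k + j] y := by rw [iterate_add_apply, hfj]
    _ = f^[j - 1] (f^[k + 1] y) := by rw [← iterate_add_apply]; congr 1; omega
    _ = f^[j - 1] y := by rw [hy]
  have hkc : f^[k] y = c := le_antisymm hlast (hback ▸ hlow (j - 1) (by omega))
  exact hc (by rw [← hkc, ← iterate_succ_apply' f k y, hy])

section IntervalDynamics

variable {α : Type*} [ConditionallyCompleteLinearOrder α] [TopologicalSpace α] [OrderTopology α]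
  [DenselyOrdered α]

theorem ContinuousOn.exists_Icc_image_eq_uIcc {δ : Type*} [LinearOrder δ] [TopologicalSpace δ]
    [OrderClosedTopology δ] {f : α → δ} {u v : α} (huv : u ≤ v) (hf : ContinuousOn f (Icc u v)) :
    ∃ s t, u ≤ s ∧ s ≤ t ∧ t ≤ v ∧ f '' Icc s t = uIcc (f u) (f v) := by
  -- `s` is the last visit of the value `f u` in `[u, v]`, `t` the first visit of `f v` after `s`
  obtain ⟨s, ⟨⟨hus, hsv⟩, hfs : f s = f u⟩, hs_max⟩ :=
    (isCompact_Icc.of_isClosed_subset (hf.preimage_isClosed_of_isClosed isClosed_Icc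
      isClosed_singleton) inter_subset_left).exists_isGreatest ⟨u, left_mem_Icc.2 huv, rfl⟩
  have hf' : ContinuousOn f (Icc s v) := hf.mono (Icc_subset_Icc_left hus)
  obtain ⟨t, ⟨⟨hst, htv⟩, hft : f t = f v⟩, ht_min⟩ :=
    (isCompact_Icc.of_isClosed_subset (hf'.preimage_isClosed_of_isClosed isClosed_Icc
      isClosed_singleton) inter_subset_left).exists_isLeast ⟨v, right_mem_Icc.2 hsv, rfl⟩
  refine ⟨s, t, hus, hst, htv, subset_antisymm (image_subset_iff.2 fun z hz => ?_) ?_⟩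
  · rw [← hfs, ← hft]
    rcases (show f z ∈ uIcc (f s) (f t) ∨ f s ∈ uIcc (f z) (f t) ∨ f t ∈ uIcc (f s) (f z) by
      simp only [mem_uIcc]; grind) with hz' | hs' | ht'
    · exact hz'
    · obtain ⟨w, hw, hfw⟩ := intermediate_value_uIcc (a := z) (b := t)
        (hf'.mono (uIcc_of_le hz.2 ▸ Icc_subset_Icc hz.1 htv)) hs'
      rw [uIcc_of_le hz.2] at hw
      have : w ≤ s := hs_max ⟨⟨hus.trans (hz.1.trans hw.1), hw.2.trans htv⟩, hfw.trans hfs⟩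
      rw [le_antisymm (hw.1.trans this) hz.1]
      exact left_mem_uIcc
    · obtain ⟨w, hw, hfw⟩ := intermediate_value_uIcc (a := s) (b := z)
        (hf'.mono (uIcc_of_le hz.1 ▸ Icc_subset_Icc le_rfl (hz.2.trans htv))) ht'
      rw [uIcc_of_le hz.1] at hw
      have : t ≤ w := ht_min ⟨⟨hw.1, hw.2.trans (hz.2.trans htv)⟩, hfw.trans hft⟩
      rw [le_antisymm hz.2 (this.trans hw.2)]
      exact right_mem_uIcc
  · rw [← hfs, ← hft, ← uIcc_of_le hst]
    exact intermediate_value_uIcc (hf'.mono (uIcc_of_le hst ▸ Icc_subset_Icc_right htv))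

theorem ContinuousOn.exists_Icc_subset_image_eq_Icc {δ : Type*} [LinearOrder δ]
    [TopologicalSpace δ] [OrderClosedTopology δ] {f : α → δ} {D : Set α} (hD : D.OrdConnected)
    (hf : ContinuousOn f D) {c d : δ} (hcd : c ≤ d) (h : Icc c d ⊆ f '' D) :
    ∃ a b, a ≤ b ∧ Icc a b ⊆ D ∧ f '' Icc a b = Icc c d := by
  have key : ∀ {u v}, u ∈ D → v ∈ D → u ≤ v →
      ∃ a b, a ≤ b ∧ Icc a b ⊆ D ∧ f '' Icc a b = uIcc (f u) (f v) := fun hu hv huv => by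
    obtain ⟨s, t, hus, hst, htv, himg⟩ := (hf.mono (hD.out hu hv)).exists_Icc_image_eq_uIcc huv
    exact ⟨s, t, hst, (Icc_subset_Icc hus htv).trans (hD.out hu hv), himg⟩
  obtain ⟨u, hu, rfl⟩ := h (left_mem_Icc.2 hcd)
  obtain ⟨v, hv, rfl⟩ := h (right_mem_Icc.2 hcd)
  rcases le_total u v with huv | hvu
  · simpa only [uIcc_of_le hcd] using key hu hv huv
  · simpa only [uIcc_of_ge hcd] using key hv hu hvu

theorem Continuous.exists_Icc_mapsTo_iterate_of_subset_image {f : α → α} (hf : Continuous f)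
    {c d : α} (hcd : c ≤ d) (k : ℕ) {I : ℕ → Set α} (hI : ∀ t, (I t).OrdConnected)
    (hcov : ∀ t < k, I (t + 1) ⊆ f '' I t) (hlast : Icc c d ⊆ f '' I k) :
    ∃ a b, a ≤ b ∧ (∀ t ≤ k, MapsTo f^[t] (Icc a b) (I t)) ∧ f^[k + 1] '' Icc a b = Icc c d := by
  induction k generalizing I with
  | zero =>
    obtain ⟨a, b, hab, hsub, himg⟩ :=
      hf.continuousOn.exists_Icc_subset_image_eq_Icc (hI 0) hcd hlast
    exact ⟨a, b, hab, fun t ht => Nat.le_zero.1 ht ▸ (mapsTo_id _).mono_right hsub, himg⟩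
  | succ k ih =>
    obtain ⟨a, b, hab, hmaps, himg⟩ :=
      ih (fun t => hI (t + 1)) (fun t ht => hcov (t + 1) (by omega)) hlast
    obtain ⟨a', b', hab', hsub, himg'⟩ := hf.continuousOn.exists_Icc_subset_image_eq_Icc (hI 0)
      hab ((hmaps 0 k.zero_le).subset_preimage.trans (by simpa using hcov 0 (by omega)))
    refine ⟨a', b', hab', fun t ht => ?_, by rw [iterate_succ, image_comp, himg', himg]⟩
    rcases t with _ | t
    · exact (mapsTo_id _).mono_right hsub
    · rw [iterate_succ]
      exact (hmaps t (by omega)).comp (himg' ▸ mapsTo_image f (Icc a' b'))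

theorem Continuous.exists_iterate_fixed_of_cycle {f : α → α} (hf : Continuous f)
    {I : ℕ → Set α} (hI : ∀ t, (I t).OrdConnected) {c d : α} (hcd : c ≤ d) (h0 : I 0 = Icc c d)
    {k : ℕ} (hcov : ∀ t < k, I (t + 1) ⊆ f '' I t) (hclose : I 0 ⊆ f '' I k) :
    ∃ y, f^[k + 1] y = y ∧ ∀ t ≤ k, f^[t] y ∈ I t := by
  obtain ⟨a, b, hab, hmaps, himg⟩ :=
    hf.exists_Icc_mapsTo_iterate_of_subset_image hcd k hI hcov (h0 ▸ hclose)
  have hsurj : SurjOn f^[k + 1] (Icc a b) (Icc a b) := by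
    rw [SurjOn, himg, ← h0]
    exact fun z hz => hmaps 0 k.zero_le hz
  obtain ⟨y, hy, hfix⟩ := exists_mem_Icc_isFixedPt_of_surjOn (hf.iterate _).continuousOn hab hsurj
  exact ⟨y, hfix, fun t ht => hmaps t ht hy⟩

end IntervalDynamics

structure IsTypeL (f : ℝ → ℝ) (m n : ℕ) (x : ℕ → ℝ) : Prop where
  apply_eq : ∀ i < m + n, f (x i) = x ((i + 1) % (m + n))
  decreasing : ∀ i, n ≤ i → i + 1 < m + n → x (i + 1) < x i
  xn_lt_x0 : x n < x 0
  increasing : ∀ i, i + 1 < n → x i < x (i + 1)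

/-- The intervals `J, …, J, K n, K (n + 1), …`, with `r` copies of `J`. -/
def typeLItinerary (x : ℕ → ℝ) (n r t : ℕ) : Set ℝ :=
  if t < r then Icc (x n) (x 0) else Icc (x (n + (t - r) + 1)) (x (n + (t - r)))

namespace IsTypeL

variable {f : ℝ → ℝ} {m n : ℕ} {x : ℕ → ℝ}

theorem apply_of_add_one_lt (h : IsTypeL f m n x) {i : ℕ} (hi : i + 1 < m + n) :
    f (x i) = x (i + 1) := by
  rw [h.apply_eq i (by omega), Nat.mod_eq_of_lt hi]

theorem apply_of_add_one_eq (h : IsTypeL f m n x) {i : ℕ} (hi : i + 1 = m + n) :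
    f (x i) = x 0 := by
  rw [h.apply_eq i (by omega), hi, Nat.mod_self]

theorem strictAntiOn (h : IsTypeL f m n x) : StrictAntiOn x (Ico n (m + n)) :=
  strictAntiOn_of_add_one_lt ordConnected_Ico fun i _ hi hi' => h.decreasing i hi.1 hi'.2

theorem tail_le (h : IsTypeL f m n x) {i j : ℕ} (hni : n ≤ i) (hij : i ≤ j) (hj : j < m + n) :
    x j ≤ x i :=
  h.strictAntiOn.antitoneOn ⟨hni, by omega⟩ ⟨by omega, hj⟩ hij

theorem itinerary_succ_subset_image (h : IsTypeL f m n x) (hf : Continuous f) (hm : 2 ≤ m)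
    (hn : 2 ≤ n) {r t : ℕ} (ht : t + 2 < r + m) :
    typeLItinerary x n r (t + 1) ⊆ f '' typeLItinerary x n r t := by
  unfold typeLItinerary
  rcases lt_or_ge t r with htr | htr
  · have hJ := intermediate_value_Icc h.xn_lt_x0.le hf.continuousOn
    rw [h.apply_of_add_one_lt (i := n) (by omega), h.apply_of_add_one_lt (i := 0) (by omega)] at hJ
    have h01 : x 0 < x 1 := h.increasing 0 (by omega)
    have hnn : x (n + 1) ≤ x n := h.tail_le le_rfl (by omega) (by omega)
    rw [if_pos htr]
    split_ifs with htr'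
    · exact (Icc_subset_Icc hnn h01.le).trans hJ
    · obtain rfl : r = t + 1 := by omega
      simp only [Nat.sub_self, add_zero]
      exact (Icc_subset_Icc le_rfl (h.xn_lt_x0.trans h01).le).trans hJ
  · rw [if_neg (by omega), if_neg (by omega), show n + (t + 1 - r) = n + (t - r) + 1 by omega]
    have hK := intermediate_value_Icc (h.tail_le (i := n + (t - r)) (j := n + (t - r) + 1)
      (by omega) (by omega) (by omega)) hf.continuousOn
    rwa [h.apply_of_add_one_lt (by omega), h.apply_of_add_one_lt (by omega)] at hK

theorem itinerary_zero_subset_image (h : IsTypeL f m n x) (hf : Continuous f) (hm : 2 ≤ m)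
    {r k : ℕ} (hr : 0 < r) (hk : k + 2 = r + m) :
    typeLItinerary x n r 0 ⊆ f '' typeLItinerary x n r k := by
  rw [typeLItinerary, typeLItinerary, if_pos hr, if_neg (by omega)]
  have hK := intermediate_value_Icc' (h.tail_le (i := n + (k - r)) (j := n + (k - r) + 1)
    (by omega) (by omega) (by omega)) hf.continuousOn
  rw [h.apply_of_add_one_eq (i := n + (k - r) + 1) (by omega),
    h.apply_of_add_one_lt (i := n + (k - r)) (by omega)] at hK
  exact (Icc_subset_Icc (h.tail_le (j := n + (k - r) + 1) le_rfl (by omega) (by omega))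
    le_rfl).trans hK

theorem le_of_mem_itinerary (h : IsTypeL f m n x) (hm : 2 ≤ m) {r t : ℕ} (ht : t + 2 < r + m)
    {z : ℝ} (hz : z ∈ typeLItinerary x n r t) : x (m + n - 2) ≤ z := by
  unfold typeLItinerary at hz
  split_ifs at hz with htr
  · exact (h.tail_le (j := m + n - 2) le_rfl (by omega) (by omega)).trans hz.1
  · exact (h.tail_le (i := n + (t - r) + 1) (j := m + n - 2) (by omega) (by omega)
      (by omega)).trans hz.1

theorem exists_periodicPt (h : IsTypeL f m n x) (hf : Continuous f) (hm : 2 ≤ m) (hn : 2 ≤ n)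
    {N : ℕ} (hN : m ≤ N) : ∃ y, f^[N] y = y ∧ ∀ j, 0 < j → j < N → f^[j] y ≠ y := by
  obtain ⟨k, rfl⟩ : ∃ k, N = k + 1 := ⟨N - 1, by omega⟩
  set r := k + 2 - m with hr
  have hJ : typeLItinerary x n r 0 = Icc (x n) (x 0) := if_pos (by omega)
  have hK : typeLItinerary x n r k = Icc (x (m + n - 1)) (x (m + n - 2)) := by
    rw [typeLItinerary, if_neg (by omega), show n + (k - r) = m + n - 2 by omega,
      show m + n - 2 + 1 = m + n - 1 by omega]
  obtain ⟨y, hy, hit⟩ := hf.exists_iterate_fixed_of_cycle (I := typeLItinerary x n r)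
    (fun t => by unfold typeLItinerary; split_ifs <;> exact ordConnected_Icc) h.xn_lt_x0.le hJ
    (fun t ht => h.itinerary_succ_subset_image hf hm hn (t := t) (by omega))
    (h.itinerary_zero_subset_image hf hm (k := k) (by omega) (by omega))
  refine ⟨y, hy, iterate_ne_self_of_le_of_iterate_le hy
    (fun t ht => h.le_of_mem_itinerary hm (by omega) (hit t ht.le)) (hK ▸ hit k le_rfl).2 ?_⟩
  have hy0 : x n ≤ y := (hJ ▸ hit 0 k.zero_le).1
  rw [h.apply_of_add_one_lt (by omega)]
  exact ((h.strictAntiOn ⟨le_rfl, by omega⟩ ⟨by omega, by omega⟩ (by omega)).trans_le hy0).ne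

end IsTypeL

theorem stmt_12_general (f : ℝ → ℝ) (hf : Continuous f) (m n : ℕ) (hm : 2 ≤ m) (hn : 2 ≤ n)
    (x : ℕ → ℝ)
    (hcyc : ∀ i < m + n, f (x i) = x ((i + 1) % (m + n)))
    (hdec : ∀ i, n ≤ i → i + 1 < m + n → x (i + 1) < x i)
    (hmid : x n < x 0)
    (hinc : ∀ i, i + 1 < n → x i < x (i + 1)) :
    ∀ N, m + n ≤ N → ∃ y : ℝ, f^[N] y = y ∧ ∀ j, 0 < j → j < N → f^[j] y ≠ y :=
  fun _ hN => (IsTypeL.mk hcyc hdec hmid hinc).exists_periodicPt hf hm hn (by omega)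

theorem stmt_12 (f : ℝ → ℝ) (hf : Continuous f) (m n : ℕ) (hm : 2 ≤ m) (hn : 2 ≤ n)
    (x : ℕ → ℝ)
    (hcyc : ∀ i < m + n, f (x i) = x ((i + 1) % (m + n)))
    (hdist : ∀ i < m + n, ∀ j < m + n, x i = x j → i = j)
    (hdec : ∀ i, n ≤ i → i + 1 < m + n → x (i + 1) < x i)
    (hmid : x n < x 0)
    (hinc : ∀ i, i + 1 < n → x i < x (i + 1)) :
    ∀ N, m + n ≤ N → ∃ y : ℝ, f^[N] y = y ∧ ∀ j, 0 < j → j < N → f^[j] y ≠ y :=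
  stmt_12_general f hf m n hm hn x hcyc hdec hmid hinc
end

section
/- If f : ℝ → ℝ is continuous and has a periodic point y₀ of period n+1 ≥ 3 whose orbit satisfies y₀ < y₁ < ⋯ < y_n (type L(n+1)), then f has a periodic point z₀ of period n whose orbit satisfies z₀ < z₁ < ⋯ < z_{n-1} (type L(n)). -/
/-!
Write `J i = [y i, y (i + 1)]` for `i < n`. As `f` sends the endpoints of `J i` to those of
`J (i + 1)`, and those of `J (n - 1)` to `y n` and `y 0`, the intervals form a cycle of coverings
`J 0 → J 1 → ⋯ → J (n - 1) → J 0`. Pulling back along it gives a point `x` with `f^[n] x = x` and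
`f^[i] x ∈ J i`. No `f^[i] x` is an endpoint `y j`, since a point of periods `n` and `n + 1` is
fixed and no `y j` is. So `f^[i] x` lies in the interior of `J i`, and the orbit is increasing.
-/

open Set Function

lemma strictMonoOn_Iio_of_lt_add_one {β : Type*} [Preorder β] {u : ℕ → β} {m : ℕ}
    (h : ∀ i, i + 1 < m → u i < u (i + 1)) : StrictMonoOn u (Iio m) :=
  strictMonoOn_of_lt_add_one ordConnected_Iio fun i _ _ hi => h i hi

section Covering

variable {f : ℝ → ℝ}

lemma exists_Icc_image_eq_of_le (hf : Continuous f) {p q : ℝ} (hpq : p ≤ q) (hfpq : f p ≤ f q) :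
    ∃ l r, p ≤ l ∧ r ≤ q ∧ f '' Icc l r = Icc (f p) (f q) := by
  -- `l` is the last visit to `f p` in `[p, q]`, and `r` the first visit to `f q` after `l`.
  set T := Icc p q ∩ f ⁻¹' {f p}
  have hT : IsCompact T := isCompact_Icc.inter_right (isClosed_singleton.preimage hf)
  obtain ⟨⟨hpl, hlq⟩, hfl⟩ : sSup T ∈ T := hT.sSup_mem ⟨p, ⟨le_rfl, hpq⟩, rfl⟩
  set l := sSup T
  set S := Icc l q ∩ f ⁻¹' {f q}
  have hS : IsCompact S := isCompact_Icc.inter_right (isClosed_singleton.preimage hf)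
  obtain ⟨⟨hlr, hrq⟩, hfr⟩ : sInf S ∈ S := hS.sInf_mem ⟨q, ⟨hlq, le_rfl⟩, rfl⟩
  set r := sInf S
  simp only [mem_preimage, mem_singleton_iff] at hfl hfr
  refine ⟨l, r, hpl, hrq, Subset.antisymm ?_ ?_⟩
  · rintro _ ⟨x, hx, rfl⟩
    refine ⟨?_, ?_⟩
    · by_contra! hlt
      obtain ⟨x', hx', hfx'⟩ :=
        intermediate_value_Icc hx.2 hf.continuousOn ⟨hlt.le, hfr ▸ hfpq⟩
      have : x' ≤ l :=
        le_csSup hT.bddAbove ⟨⟨hpl.trans (hx.1.trans hx'.1), hx'.2.trans hrq⟩, hfx'⟩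
      obtain rfl : x' = x := by linarith [hx.1, hx'.1]
      exact hlt.ne hfx'
    · by_contra! hlt
      obtain ⟨x', hx', hfx'⟩ :=
        intermediate_value_Icc hx.1 hf.continuousOn ⟨hfl ▸ hfpq, hlt.le⟩
      have : r ≤ x' := csInf_le hS.bddBelow ⟨⟨hx'.1, hx'.2.trans (hx.2.trans hrq)⟩, hfx'⟩
      obtain rfl : x' = x := by linarith [hx.2, hx'.2]
      exact hlt.ne' hfx'
  · simpa only [hfl, hfr] using intermediate_value_Icc hlr hf.continuousOn

lemma exists_Icc_image_eq_of_subset_image (hf : Continuous f) {a b c d : ℝ} (hcd : c ≤ d)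
    (h : Icc c d ⊆ f '' Icc a b) : ∃ l r, Icc l r ⊆ Icc a b ∧ f '' Icc l r = Icc c d := by
  obtain ⟨p, hp, rfl⟩ := h (left_mem_Icc.2 hcd)
  obtain ⟨q, hq, rfl⟩ := h (right_mem_Icc.2 hcd)
  rcases le_total p q with hpq | hqp
  · obtain ⟨l, r, hpl, hrq, himg⟩ := exists_Icc_image_eq_of_le hf hpq hcd
    exact ⟨l, r, Icc_subset_Icc (hp.1.trans hpl) (hrq.trans hq.2), himg⟩
  · obtain ⟨l, r, hpl, hrq, himg⟩ :=
      exists_Icc_image_eq_of_le (hf.comp continuous_neg) (neg_le_neg hqp) (by simpa using hcd)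
    refine ⟨-r, -l, Icc_subset_Icc (by linarith [hq.1]) (by linarith [hp.2]), ?_⟩
    rw [← neg_Icc, ← image_neg_eq_neg, ← image_comp]
    simpa using himg

lemma exists_Icc_iterate_image_eq (hf : Continuous f) (a b : ℕ → ℝ) (hab : ∀ i, a i ≤ b i)
    (n : ℕ) (hcov : ∀ i < n, Icc (a (i + 1)) (b (i + 1)) ⊆ f '' Icc (a i) (b i)) :
    ∃ l r, (∀ i ≤ n, f^[i] '' Icc l r ⊆ Icc (a i) (b i)) ∧
      f^[n] '' Icc l r = Icc (a n) (b n) := by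
  induction n with
  | zero => exact ⟨a 0, b 0, fun i hi => by simp [Nat.le_zero.1 hi], by simp⟩
  | succ n ih =>
    obtain ⟨l, r, hsub, himg⟩ := ih fun i hi => hcov i (by omega)
    have hcov' : Icc (a (n + 1)) (b (n + 1)) ⊆ f^[n + 1] '' Icc l r := by
      rw [iterate_succ', image_comp, himg]
      exact hcov n (Nat.lt_add_one n)
    obtain ⟨l', r', hlr', himg'⟩ :=
      exists_Icc_image_eq_of_subset_image (hf.iterate _) (hab _) hcov'
    refine ⟨l', r', fun i hi => ?_, himg'⟩
    rcases hi.lt_or_eq with hi | rfl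
    · exact (image_mono hlr').trans (hsub i (by omega))
    · exact himg'.subset

lemma exists_isFixedPt_of_Icc_subset_image (hf : Continuous f) {l r : ℝ} (hlr : l ≤ r)
    (h : Icc l r ⊆ f '' Icc l r) : ∃ x ∈ Icc l r, IsFixedPt f x := by
  obtain ⟨p, hp, hfp⟩ := h (left_mem_Icc.2 hlr)
  obtain ⟨q, hq, hfq⟩ := h (right_mem_Icc.2 hlr)
  obtain ⟨x, hx, hfx⟩ := intermediate_value_uIcc (hf.sub continuous_id).continuousOn
    (mem_uIcc.2 (Or.inl ⟨by simp [hfp, hp.1], by simp [hfq, hq.2]⟩) :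
      (0 : ℝ) ∈ uIcc (f p - id p) (f q - id q))
  exact ⟨x, uIcc_subset_Icc hp hq hx, sub_eq_zero.1 hfx⟩

theorem exists_isPeriodicPt_of_Icc_cycle (hf : Continuous f) {n : ℕ} (hn : 0 < n)
    (a b : ℕ → ℝ) (hab : ∀ i < n, a i ≤ b i)
    (hcov : ∀ i < n, Icc (a ((i + 1) % n)) (b ((i + 1) % n)) ⊆ f '' Icc (a i) (b i)) :
    ∃ x, IsPeriodicPt f n x ∧ ∀ i < n, f^[i] x ∈ Icc (a i) (b i) := by
  obtain ⟨l, r, hsub, himg⟩ := exists_Icc_iterate_image_eq hf (fun i => a (i % n))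
    (fun i => b (i % n)) (fun i => hab _ (Nat.mod_lt _ hn)) n
    (fun i hi => by simpa only [Nat.mod_eq_of_lt hi] using hcov i hi)
  simp only [Nat.mod_self] at himg
  have h0 : Icc l r ⊆ Icc (a 0) (b 0) := by simpa using hsub 0 (Nat.zero_le n)
  have hlr : l ≤ r := nonempty_Icc.1 (himg ▸ nonempty_Icc.2 (hab 0 hn)).of_image
  obtain ⟨x, hx, hfix⟩ := exists_isFixedPt_of_Icc_subset_image (hf.iterate n) hlr (himg ▸ h0)
  refine ⟨x, hfix, fun i hi => ?_⟩
  simpa only [Nat.mod_eq_of_lt hi] using hsub i hi.le (mem_image_of_mem _ hx)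

end Covering

section OrderedOrbit

variable {f : ℝ → ℝ} {n : ℕ} {y : ℕ → ℝ}
  (hcyc : ∀ i < n + 1, f (y i) = y ((i + 1) % (n + 1)))

include hcyc

lemma orbit_apply_of_lt {i : ℕ} (hi : i < n) : f (y i) = y (i + 1) := by
  rw [hcyc i (by omega), Nat.mod_eq_of_lt (by omega)]

lemma orbit_apply_last : f (y n) = y 0 := by
  rw [hcyc n (Nat.lt_add_one n), Nat.mod_self]

lemma iterate_orbit_zero {i : ℕ} (hi : i ≤ n) : f^[i] (y 0) = y i := by
  induction i with
  | zero => rfl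
  | succ i ih => rw [iterate_succ_apply', ih (by omega), orbit_apply_of_lt hcyc (by omega)]

lemma isPeriodicPt_orbit_zero : IsPeriodicPt f (n + 1) (y 0) := by
  rw [IsPeriodicPt, IsFixedPt, iterate_succ_apply', iterate_orbit_zero hcyc le_rfl,
    orbit_apply_last hcyc]

variable (hinc : ∀ i, i + 1 < n + 1 → y i < y (i + 1))

include hinc

lemma orbit_apply_ne_self (hn : 0 < n) {j : ℕ} (hj : j ≤ n) : f (y j) ≠ y j := by
  rcases hj.lt_or_eq with hj | rfl
  · exact (orbit_apply_of_lt hcyc hj ▸ hinc j (by omega)).ne'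
  · rw [orbit_apply_last hcyc]
    exact ((strictMonoOn_Iio_of_lt_add_one hinc) (by simp) (by simp) hn).ne

lemma ne_orbit_of_isPeriodicPt (hn : 0 < n) {p : ℝ} (hp : IsPeriodicPt f n p) {j : ℕ}
    (hj : j ≤ n) : p ≠ y j := by
  rintro rfl
  have hp' : IsPeriodicPt f (n + 1) (y j) :=
    iterate_orbit_zero hcyc hj ▸ (isPeriodicPt_orbit_zero hcyc).apply_iterate j
  have hfix : IsPeriodicPt f 1 (y j) := by
    simpa [Nat.coprime_self_add_right.2 (Nat.coprime_one_right n)] using hp.gcd hp'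
  exact orbit_apply_ne_self hcyc hinc hn hj hfix

lemma Icc_orbit_subset_image (hf : Continuous f) {i : ℕ} (hi : i < n) :
    Icc (y ((i + 1) % n)) (y ((i + 1) % n + 1)) ⊆ f '' Icc (y i) (y (i + 1)) := by
  rcases (Nat.succ_le_of_lt hi).lt_or_eq with hi' | rfl
  · rw [Nat.mod_eq_of_lt hi']
    simpa only [orbit_apply_of_lt hcyc hi, orbit_apply_of_lt hcyc hi'] using
      intermediate_value_Icc (hinc i (by omega)).le hf.continuousOn
  · rw [Nat.mod_self]
    have h := intermediate_value_Icc' (hinc i (by omega)).le hf.continuousOn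
    rw [orbit_apply_of_lt hcyc hi, orbit_apply_last hcyc] at h
    exact (Icc_subset_Icc_right
      ((strictMonoOn_Iio_of_lt_add_one hinc).monotoneOn (by simp) (by simp) (by omega))).trans h

end OrderedOrbit

theorem stmt_15_general (f : ℝ → ℝ) (hf : Continuous f) (n : ℕ)
    (y : ℕ → ℝ)
    (hcyc : ∀ i < n + 1, f (y i) = y ((i + 1) % (n + 1)))
    (hinc : ∀ i, i + 1 < n + 1 → y i < y (i + 1)) :
    ∃ z : ℕ → ℝ,
      (∀ i < n, f (z i) = z ((i + 1) % n)) ∧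
      (∀ i < n, ∀ j < n, z i = z j → i = j) ∧
      (∀ i, i + 1 < n → z i < z (i + 1)) := by
  rcases Nat.eq_zero_or_pos n with rfl | hn
  · exact ⟨y, by simp, by simp, by simp⟩
  obtain ⟨x, hx, hxJ⟩ := exists_isPeriodicPt_of_Icc_cycle hf hn y (fun i => y (i + 1))
    (fun i hi => (hinc i (by omega)).le) fun i hi => Icc_orbit_subset_image hcyc hinc hf hi
  have hz : ∀ i < n, f^[i] x ∈ Ioo (y i) (y (i + 1)) := fun i hi =>
    have hxi := hx.apply_iterate i
    ⟨(hxJ i hi).1.lt_of_ne (ne_orbit_of_isPeriodicPt hcyc hinc hn hxi (by omega)).symm,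
      (hxJ i hi).2.lt_of_ne (ne_orbit_of_isPeriodicPt hcyc hinc hn hxi (by omega))⟩
  have hzinc : ∀ i, i + 1 < n → f^[i] x < f^[i + 1] x := fun i hi =>
    (hz i (by omega)).2.trans (hz (i + 1) hi).1
  refine ⟨fun i => f^[i] x, fun i _ => ?_,
    fun i hi j hj => (strictMonoOn_Iio_of_lt_add_one hzinc).injOn hi hj, hzinc⟩
  dsimp only
  rw [hx.iterate_mod_apply, iterate_succ_apply']

theorem stmt_15 (f : ℝ → ℝ) (hf : Continuous f) (n : ℕ) (hn : 2 ≤ n)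
    (y : ℕ → ℝ)
    (hcyc : ∀ i < n + 1, f (y i) = y ((i + 1) % (n + 1)))
    (hdist : ∀ i < n + 1, ∀ j < n + 1, y i = y j → i = j)
    (hinc : ∀ i, i + 1 < n + 1 → y i < y (i + 1)) :
    ∃ z : ℕ → ℝ,
      (∀ i < n, f (z i) = z ((i + 1) % n)) ∧
      (∀ i < n, ∀ j < n, z i = z j → i = j) ∧
      (∀ i, i + 1 < n → z i < z (i + 1)) :=
  stmt_15_general f hf n y hcyc hinc
end

section
/- If f : ℝ → ℝ is continuous and has a periodic orbit of Štefan type of period 2n+1 (n ≥ 1), i.e., x_{2n} < x_{2n-2} < ⋯ < x₂ < x₀ < x₁ < x₃ < ⋯ < x_{2n-1} with f(x_i) = x_{i+1} cyclically, then f has a periodic point of period 2n+3. -/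
/-!
With `J = [x₀, x₁]`, the orbit forces the covering relations `J → J`, `J → [x₀, x₂]`,
`[x_{i-1}, x_{i+1}] → [x_i, x_{i+2}]` and `[x_{2n-2}, x_{2n}] → J`: a continuous map covers the
interval spanned by the images of the endpoints. A loop of closed intervals, each covering the
next, carries a periodic point following it, so the loop `J J J J [x₀, x₂] ⋯ [x_{2n-2}, x_{2n}]`
gives a fixed point `p` of `f^[2n+3]`. Its minimal period `k` divides `2n + 3`; were it smaller,
`k` would be odd with `3k ≤ 2n + 3`, and `f^[4+k] p = f^[4] p` would lie both in `[x₂, x₀]` and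
in `[x_k, x_{k+2}]`, to the right of `x₁`. The case `k = 1` is excluded since `J ∩ [x₂, x₀] = {x₀}`
and `x₀` is not fixed.
-/

open Set Function

section Covering

variable {α δ : Type*} [ConditionallyCompleteLinearOrder α] [TopologicalSpace α] [OrderTopology α]
  [DenselyOrdered α] [LinearOrder δ] [TopologicalSpace δ] [OrderClosedTopology δ]

/-- Take the last time `f` equals `f u` and, after it, the first time `f` equals `f v`;
in between, `f` can leave `[f u, f v]` only by crossing one of these values again. -/
theorem exists_Icc_subset_image_eq_Icc {f : α → δ} {u v : α} (huv : u ≤ v)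
    (hf : ContinuousOn f (Icc u v)) (hfuv : f u ≤ f v) :
    ∃ a b, Icc a b ⊆ Icc u v ∧ f '' Icc a b = Icc (f u) (f v) := by
  set S := Icc u v ∩ f ⁻¹' {f u}
  have hS : IsClosed S := hf.preimage_isClosed_of_isClosed isClosed_Icc isClosed_singleton
  have hSa : sSup S ∈ S := hS.csSup_mem ⟨u, ⟨le_rfl, huv⟩, rfl⟩ ⟨v, fun y hy => hy.1.2⟩
  set a := sSup S
  have hav : a ≤ v := hSa.1.2
  set T := Icc a v ∩ f ⁻¹' {f v}
  have hT : IsClosed T :=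
    (hf.mono (Icc_subset_Icc_left hSa.1.1)).preimage_isClosed_of_isClosed isClosed_Icc
      isClosed_singleton
  have hTb : sInf T ∈ T := hT.csInf_mem ⟨v, ⟨hav, le_rfl⟩, rfl⟩ ⟨a, fun y hy => hy.1.1⟩
  set b := sInf T
  have hsub : Icc a b ⊆ Icc u v := Icc_subset_Icc hSa.1.1 hTb.1.2
  have hfa : f a = f u := hSa.2
  have hfb : f b = f v := hTb.2
  refine ⟨a, b, hsub, Subset.antisymm ?_ ?_⟩
  · rintro _ ⟨w, hw, rfl⟩
    constructor
    · by_contra! hlt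
      obtain ⟨z, hz, hfz⟩ := intermediate_value_Icc hw.2
        (hf.mono ((Icc_subset_Icc_left hw.1).trans hsub)) ⟨hlt.le, hfb ▸ hfuv⟩
      have : z ≤ a := le_csSup ⟨v, fun y hy => hy.1.2⟩ ⟨hsub ⟨hw.1.trans hz.1, hz.2⟩, hfz⟩
      exact hlt.ne (le_antisymm hz.1 (this.trans hw.1) ▸ hfz)
    · by_contra! hlt
      obtain ⟨z, hz, hfz⟩ := intermediate_value_Icc hw.1
        (hf.mono ((Icc_subset_Icc_right hw.2).trans hsub)) ⟨hfa ▸ hfuv, hlt.le⟩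
      have : b ≤ z :=
        csInf_le ⟨a, fun y hy => hy.1.1⟩ ⟨⟨hz.1, hz.2.trans (hw.2.trans hTb.1.2)⟩, hfz⟩
      exact hlt.ne' (le_antisymm hz.2 (hw.2.trans this) ▸ hfz)
  · rw [← hfa, ← hfb]
    exact intermediate_value_Icc hTb.1.1 (hf.mono hsub)

theorem exists_Icc_subset_image_eq_of_surjOn {f : α → δ} {s : Set α} [s.OrdConnected]
    (hf : ContinuousOn f s) {c d : δ} (hcd : c ≤ d) (h : SurjOn f s (Icc c d)) :
    ∃ a b, Icc a b ⊆ s ∧ f '' Icc a b = Icc c d := by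
  obtain ⟨u, hu, rfl⟩ := h ⟨le_rfl, hcd⟩
  obtain ⟨v, hv, rfl⟩ := h ⟨hcd, le_rfl⟩
  rcases le_total u v with huv | hvu
  · obtain ⟨a, b, hab, him⟩ :=
      exists_Icc_subset_image_eq_Icc huv (hf.mono (Set.Icc_subset s hu hv)) hcd
    exact ⟨a, b, hab.trans (Set.Icc_subset s hu hv), him⟩
  · obtain ⟨a, b, hab, him⟩ := exists_Icc_subset_image_eq_Icc (f := OrderDual.toDual ∘ f) hvu
      (hf.mono (Set.Icc_subset s hv hu)) hcd
    refine ⟨a, b, hab.trans (Set.Icc_subset s hv hu), ext fun y => ?_⟩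
    simpa [and_comm] using Set.ext_iff.mp him (OrderDual.toDual y)

theorem exists_Icc_subset_image_eq_uIcc_of_surjOn {f : α → δ} {s : Set α} [s.OrdConnected]
    (hf : ContinuousOn f s) {c d : δ} (h : SurjOn f s (uIcc c d)) :
    ∃ a b, Icc a b ⊆ s ∧ f '' Icc a b = uIcc c d :=
  exists_Icc_subset_image_eq_of_surjOn hf inf_le_sup h

end Covering

section Itinerary

variable {α : Type*} [ConditionallyCompleteLinearOrder α] [TopologicalSpace α] [OrderTopology α]
  [DenselyOrdered α] {f : α → α} {I : ℕ → Set α}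

theorem exists_Icc_itinerary (hf : Continuous f) (hI : ∀ j, ∃ a b, I j = uIcc a b) :
    ∀ m, (∀ j < m, SurjOn f (I j) (I (j + 1))) →
      ∃ a b, Icc a b ⊆ I 0 ∧ f^[m] '' Icc a b = I m ∧ ∀ j ≤ m, MapsTo f^[j] (Icc a b) (I j)
  | 0, _ => by
    obtain ⟨a, b, h⟩ := hI 0
    refine ⟨a ⊓ b, a ⊔ b, h.ge, by simp [h, uIcc], fun j hj => ?_⟩
    obtain rfl : j = 0 := by omega
    simpa [h, uIcc] using mapsTo_id _
  | m + 1, hcov => by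
    obtain ⟨a, b, h0, hm, hmaps⟩ := exists_Icc_itinerary hf hI m fun j hj => hcov j (by omega)
    have hsurj : SurjOn f^[m + 1] (Icc a b) (I (m + 1)) := by
      rw [SurjOn, iterate_succ', image_comp, hm]
      exact hcov m (by omega)
    obtain ⟨c, d, hcd⟩ := hI (m + 1)
    obtain ⟨a', b', hsub, him⟩ :=
      exists_Icc_subset_image_eq_uIcc_of_surjOn (hf.iterate _).continuousOn (hcd ▸ hsurj)
    rw [← hcd] at him
    refine ⟨a', b', hsub.trans h0, him, fun j hj => ?_⟩
    rcases hj.lt_or_eq with hj | rfl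
    · exact (hmaps j (by omega)).mono_left hsub
    · exact him ▸ mapsTo_image _ _

theorem exists_isPeriodicPt_of_surjOn_cycle (hf : Continuous f)
    (hI : ∀ j, ∃ a b, I j = uIcc a b) {m : ℕ} (hcov : ∀ j < m, SurjOn f (I j) (I (j + 1)))
    (hclose : I 0 ⊆ I m) : ∃ p, IsPeriodicPt f m p ∧ ∀ j ≤ m, f^[j] p ∈ I j := by
  obtain ⟨a, b, h0, hm, hmaps⟩ := exists_Icc_itinerary hf hI m hcov
  have hsurj : SurjOn f^[m] (Icc a b) (Icc a b) := by
    rw [SurjOn, hm]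
    exact h0.trans hclose
  have hab : a ≤ b := by
    obtain ⟨c, d, hcd⟩ := hI m
    rw [← nonempty_Icc, ← image_nonempty (f := f^[m]), hm, hcd]
    exact nonempty_uIcc
  obtain ⟨p, hp, hfix⟩ :=
    exists_mem_Icc_isFixedPt_of_surjOn (hf.iterate m).continuousOn hab hsurj
  exact ⟨p, hfix, fun j hj => hmaps j hj hp⟩

end Itinerary

theorem Nat.three_mul_le_of_dvd_of_odd {k N : ℕ} (hN : Odd N) (hk : k ∣ N) (hne : k ≠ N) :
    3 * k ≤ N := by
  obtain ⟨t, rfl⟩ := hk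
  obtain ⟨r, rfl⟩ := (Nat.odd_mul.mp hN).2
  have hr : 1 ≤ r := by
    by_contra! hr
    simp_all
  calc 3 * k ≤ (2 * r + 1) * k := Nat.mul_le_mul_right k (by omega)
    _ = k * (2 * r + 1) := mul_comm _ _

namespace Stefan

/-- The cycle of intervals `J → J → J → J → [x₀, x₂] → [x₁, x₃] → ⋯ → [x_{2n-2}, x_{2n}] → J`
with `J = [x₀, x₁]`, indexed by `j = 0, …, 2n + 3`. -/
def interval (x : ℕ → ℝ) (n j : ℕ) : Set ℝ :=
  if 4 ≤ j ∧ j ≤ 2 * n + 2 then uIcc (x (j - 4)) (x (j - 2)) else uIcc (x 0) (x 1)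

variable {f : ℝ → ℝ} {x : ℕ → ℝ} {n : ℕ}

theorem interval_of_le_of_le {j : ℕ} (h4 : 4 ≤ j) (hj : j ≤ 2 * n + 2) :
    interval x n j = uIcc (x (j - 4)) (x (j - 2)) :=
  if_pos ⟨h4, hj⟩

theorem interval_of_lt_or_lt {j : ℕ} (hj : j < 4 ∨ 2 * n + 2 < j) :
    interval x n j = uIcc (x 0) (x 1) :=
  if_neg (by omega)

theorem exists_interval_eq_uIcc (j : ℕ) : ∃ a b, interval x n j = uIcc a b := by
  unfold interval
  split_ifs <;> exact ⟨_, _, rfl⟩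

theorem one_le_odd (hodd : ∀ i, 2 * i + 3 ≤ 2 * n → x (2 * i + 1) < x (2 * i + 3)) :
    ∀ i, 2 * i + 1 ≤ 2 * n → x 1 ≤ x (2 * i + 1)
  | 0, _ => le_rfl
  | i + 1, hi => (one_le_odd hodd i (by omega)).trans (hodd i (by omega)).le

theorem surjOn_interval (hf : Continuous f) (hn : 1 ≤ n)
    (hcyc : ∀ i < 2 * n + 1, f (x i) = x ((i + 1) % (2 * n + 1)))
    (heven : ∀ i, 2 * i + 2 ≤ 2 * n → x (2 * i + 2) < x (2 * i))
    (h01 : x 0 < x 1)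
    (hodd : ∀ i, 2 * i + 3 ≤ 2 * n → x (2 * i + 1) < x (2 * i + 3)) :
    ∀ j < 2 * n + 3, SurjOn f (interval x n j) (interval x n (j + 1)) := by
  have hnext : ∀ i < 2 * n, f (x i) = x (i + 1) := fun i hi => by
    rw [hcyc i (by omega), Nat.mod_eq_of_lt (by omega)]
  have hlast : f (x (2 * n)) = x 0 := by rw [hcyc _ (by omega), Nat.mod_self]
  have ivt (a b : ℝ) : SurjOn f (uIcc a b) (uIcc (f a) (f b)) :=
    intermediate_value_uIcc hf.continuousOn
  have h20 : x 2 < x 0 := heven 0 (by omega)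
  have hJ : SurjOn f (uIcc (x 0) (x 1)) (uIcc (x 1) (x 2)) := by
    simpa only [hnext 0 (by omega), hnext 1 (by omega)] using ivt (x 0) (x 1)
  have hx0 : x 0 ∈ uIcc (x 1) (x 2) := mem_uIcc.2 (Or.inr ⟨h20.le, h01.le⟩)
  intro j hj
  rcases (by omega : j ≤ 2 ∨ j = 3 ∨ (4 ≤ j ∧ j ≤ 2 * n + 1) ∨ j = 2 * n + 2) with
    hj | rfl | ⟨hj4, hj⟩ | rfl
  · rw [interval_of_lt_or_lt (by omega), interval_of_lt_or_lt (by omega)]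
    exact hJ.mono subset_rfl (uIcc_subset_uIcc hx0 left_mem_uIcc)
  · rw [interval_of_lt_or_lt (by omega), interval_of_le_of_le le_rfl (by omega)]
    exact hJ.mono subset_rfl (uIcc_subset_uIcc hx0 right_mem_uIcc)
  · have h4 : f (x (j - 4)) = x (j + 1 - 4) := by rw [hnext _ (by omega)]; congr 1; omega
    have h2 : f (x (j - 2)) = x (j + 1 - 2) := by rw [hnext _ (by omega)]; congr 1; omega
    rw [interval_of_le_of_le hj4 (by omega), interval_of_le_of_le (by omega) (by omega),
      ← h4, ← h2]
    exact ivt _ _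
  · have h2 : f (x (2 * n + 2 - 4)) = x (2 * (n - 1) + 1) := by
      rw [hnext _ (by omega)]; congr 1; omega
    have hx1 : x 1 ∈ uIcc (x (2 * (n - 1) + 1)) (x 0) :=
      mem_uIcc.2 (Or.inr ⟨h01.le, one_le_odd hodd (n - 1) (by omega)⟩)
    rw [interval_of_le_of_le (by omega) le_rfl, interval_of_lt_or_lt (by omega)]
    refine (ivt _ _).mono subset_rfl ?_
    rw [h2, show 2 * n + 2 - 2 = 2 * n by omega, hlast]
    exact uIcc_subset_uIcc right_mem_uIcc hx1

theorem minimalPeriod_eq (hn : 1 ≤ n)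
    (hcyc : ∀ i < 2 * n + 1, f (x i) = x ((i + 1) % (2 * n + 1)))
    (heven : ∀ i, 2 * i + 2 ≤ 2 * n → x (2 * i + 2) < x (2 * i))
    (h01 : x 0 < x 1)
    (hodd : ∀ i, 2 * i + 3 ≤ 2 * n → x (2 * i + 1) < x (2 * i + 3))
    {p : ℝ} (hp : IsPeriodicPt f (2 * n + 3) p)
    (hitin : ∀ j ≤ 2 * n + 3, f^[j] p ∈ interval x n j) :
    minimalPeriod f p = 2 * n + 3 := by
  set k := minimalPeriod f p
  have hper : IsPeriodicPt f k p := isPeriodicPt_minimalPeriod f p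
  have hk0 : 0 < k := hp.minimalPeriod_pos (by omega)
  have hkodd : Odd k := (odd_two_mul_add_one (n + 1)).of_dvd_nat hp.minimalPeriod_dvd
  by_contra hne
  have h3k : 3 * k ≤ 2 * n + 3 :=
    Nat.three_mul_le_of_dvd_of_odd (odd_two_mul_add_one (n + 1)) hp.minimalPeriod_dvd hne
  have h20 : x 2 < x 0 := heven 0 (by omega)
  have h4 : f^[4] p ∈ uIcc (x 0) (x 2) := by
    simpa [interval_of_le_of_le le_rfl (by omega : 4 ≤ 2 * n + 2)] using hitin 4 (by omega)
  have h4le : f^[4] p ≤ x 0 := h4.2.trans (max_eq_left h20.le).le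
  rcases (by obtain ⟨i, hi⟩ := hkodd; omega : k = 1 ∨ 3 ≤ k) with hk1 | hk3
  · have hfix : IsFixedPt f p := minimalPeriod_eq_one_iff_isFixedPt.mp hk1
    have hp0 : p ∈ uIcc (x 0) (x 1) := by simpa [interval_of_lt_or_lt] using hitin 0 (by omega)
    have hpx0 : p = x 0 := le_antisymm (hfix.iterate 4 ▸ h4le) (min_eq_left h01.le ▸ hp0.1)
    have := hcyc 0 (by omega)
    rw [Nat.mod_eq_of_lt (by omega), ← hpx0, hfix.eq] at this
    exact h01.ne (hpx0 ▸ this)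
  · have hback : f^[4 + k] p = f^[4] p := by rw [iterate_add_apply, hper.eq]
    have hmem := hitin (4 + k) (by omega)
    rw [interval_of_le_of_le (by omega) (by omega), hback] at hmem
    obtain ⟨i, hi⟩ := hkodd
    have hlo : x 1 ≤ x (4 + k - 4) ⊓ x (4 + k - 2) := by
      rw [show 4 + k - 4 = 2 * i + 1 by omega, show 4 + k - 2 = 2 * (i + 1) + 1 by omega]
      exact le_inf (one_le_odd hodd i (by omega)) (one_le_odd hodd (i + 1) (by omega))
    linarith [hlo.trans hmem.1]

end Stefan

theorem stmt_16_general (f : ℝ → ℝ) (hf : Continuous f) (n : ℕ) (hn : 1 ≤ n)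
    (x : ℕ → ℝ)
    (hcyc : ∀ i < 2 * n + 1, f (x i) = x ((i + 1) % (2 * n + 1)))
    (heven : ∀ i, 2 * i + 2 ≤ 2 * n → x (2 * i + 2) < x (2 * i))
    (h01 : x 0 < x 1)
    (hodd : ∀ i, 2 * i + 3 ≤ 2 * n → x (2 * i + 1) < x (2 * i + 3)) :
    ∃ p : ℝ, f^[2 * n + 3] p = p ∧ ∀ j, 0 < j → j < 2 * n + 3 → f^[j] p ≠ p := by
  have hclose : Stefan.interval x n 0 ⊆ Stefan.interval x n (2 * n + 3) := by
    rw [Stefan.interval_of_lt_or_lt (by omega), Stefan.interval_of_lt_or_lt (by omega)]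
  obtain ⟨p, hp, hitin⟩ := exists_isPeriodicPt_of_surjOn_cycle hf Stefan.exists_interval_eq_uIcc
    (Stefan.surjOn_interval hf hn hcyc heven h01 hodd) hclose
  have hmin := Stefan.minimalPeriod_eq hn hcyc heven h01 hodd hp hitin
  exact ⟨p, hp, fun j hj0 hj => not_isPeriodicPt_of_pos_of_lt_minimalPeriod hj0.ne' (hmin ▸ hj)⟩

theorem stmt_16 (f : ℝ → ℝ) (hf : Continuous f) (n : ℕ) (hn : 1 ≤ n)
    (x : ℕ → ℝ)
    (hcyc : ∀ i < 2 * n + 1, f (x i) = x ((i + 1) % (2 * n + 1)))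
    (hdist : ∀ i < 2 * n + 1, ∀ j < 2 * n + 1, x i = x j → i = j)
    (heven : ∀ i, 2 * i + 2 ≤ 2 * n → x (2 * i + 2) < x (2 * i))
    (h01 : x 0 < x 1)
    (hodd : ∀ i, 2 * i + 3 ≤ 2 * n → x (2 * i + 1) < x (2 * i + 3)) :
    ∃ p : ℝ, f^[2 * n + 3] p = p ∧ ∀ j, 0 < j → j < 2 * n + 3 → f^[j] p ≠ p :=
  stmt_16_general f hf n hn x hcyc heven h01 hodd
end

section
/- If f : ℝ → ℝ is continuous and has a periodic orbit of period m+n of type L(m,n) with m,n ≥ 2, then for all integers m' ≥ m and n' ≥ n, f has a periodic orbit of period m'+n' of type L(m',n'). -/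
/-!
If `x` is an orbit of type `L(m,n)` with `x n < x 0`, then `f - id` changes sign on
`[x n, x 0]`, giving a fixed point `z` there. The intervals `[z, x 0], [x 0, x 1], …,
[x (n-2), x (n-1)]` followed by `[x n, z], [x (n+1), x n], …, [x (m+n-1), x (m+n-2)]` form a
loop in which each interval `f`-covers the next, and a periodic point following any such loop
of two monotone chains through `z` is an orbit of type `L`. Inserting a preimage of `x 0` in
`(z, x 0)`, or of `x n` in `(x n, z)`, lengthens one chain by an interval, which raises `n`
or `m` by one. Conjugating by `u ↦ -u` handles the reversed ordering.
-/

/-- `f` has a periodic orbit of period `m + n` of type `L(m,n)` (up to reversal of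
all inequalities): distinct points `x 0, …, x (m+n-1)` mapped cyclically by `f`
with `x (m+n-1) < ⋯ < x (n+1) < x n < x 0 < x 1 < ⋯ < x (n-1)`, or the same with
all inequalities reversed. -/
def LType (f : ℝ → ℝ) (m n : ℕ) : Prop :=
  ∃ x : ℕ → ℝ,
    (∀ i < m + n, f (x i) = x ((i + 1) % (m + n))) ∧
    (∀ i < m + n, ∀ j < m + n, x i = x j → i = j) ∧
    (((∀ i, n ≤ i → i + 1 < m + n → x (i + 1) < x i) ∧ x n < x 0 ∧
        (∀ i, i + 1 < n → x i < x (i + 1))) ∨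
     ((∀ i, n ≤ i → i + 1 < m + n → x i < x (i + 1)) ∧ x 0 < x n ∧
        (∀ i, i + 1 < n → x (i + 1) < x i)))

open Set Function

section Covering

variable {g : ℝ → ℝ}

theorem surjOn_Icc_of_le {a b c d : ℝ} (hg : ContinuousOn g (Icc a b)) (hab : a ≤ b)
    (ha : g a ≤ c) (hb : d ≤ g b) : SurjOn g (Icc a b) (Icc c d) :=
  (Icc_subset_Icc ha hb).trans (intermediate_value_Icc hab hg)

theorem surjOn_Icc_of_ge {a b c d : ℝ} (hg : ContinuousOn g (Icc a b)) (hab : a ≤ b)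
    (ha : d ≤ g a) (hb : g b ≤ c) : SurjOn g (Icc a b) (Icc c d) :=
  (Icc_subset_Icc hb ha).trans (intermediate_value_Icc' hab hg)

theorem exists_Icc_image_eq_of_le_s18 (hg : Continuous g) {x₁ x₂ c d : ℝ} (hx : x₁ ≤ x₂)
    (hcd : c ≤ d) (h₁ : g x₁ = c) (h₂ : g x₂ = d) :
    ∃ p q, x₁ ≤ p ∧ p ≤ q ∧ q ≤ x₂ ∧ g '' Icc p q = Icc c d := by
  -- `p` is the last visit to `c` in `[x₁, x₂]` and `q` the first visit to `d` after `p`,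
  -- so `g` takes neither value `c` nor `d` strictly between `p` and `q`
  obtain ⟨p, ⟨⟨hx₁p, hpx₂⟩, hgp : g p = c⟩, hp_last⟩ :=
    (isCompact_Icc.inter_right (isClosed_singleton.preimage hg)).exists_isGreatest
      (s := Icc x₁ x₂ ∩ g ⁻¹' {c}) ⟨x₁, ⟨le_rfl, hx⟩, h₁⟩
  obtain ⟨q, ⟨⟨hpq, hqx₂⟩, hgq : g q = d⟩, hq_first⟩ :=
    (isCompact_Icc.inter_right (isClosed_singleton.preimage hg)).exists_isLeast
      (s := Icc p x₂ ∩ g ⁻¹' {d}) ⟨x₂, ⟨hpx₂, le_rfl⟩, h₂⟩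
  refine ⟨p, q, hx₁p, hpq, hqx₂, Subset.antisymm ?_ ?_⟩
  · rintro _ ⟨x, hx, rfl⟩
    constructor
    · by_contra! hlt
      obtain ⟨x', hx', hgx'⟩ :=
        intermediate_value_Icc hx.2 hg.continuousOn ⟨hlt.le, hgq ▸ hcd⟩
      have hx'p : x' ≤ p :=
        hp_last ⟨⟨hx₁p.trans (hx.1.trans hx'.1), hx'.2.trans hqx₂⟩, hgx'⟩
      have hxp : x = p := le_antisymm (hx'.1.trans hx'p) hx.1
      rw [hxp, hgp] at hlt
      exact lt_irrefl _ hlt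
    · by_contra! hlt
      obtain ⟨x', hx', hgx'⟩ :=
        intermediate_value_Icc hx.1 hg.continuousOn ⟨hgp ▸ hcd, hlt.le⟩
      have hqx' : q ≤ x' := hq_first ⟨⟨hx'.1, hx'.2.trans (hx.2.trans hqx₂)⟩, hgx'⟩
      have hxq : x = q := le_antisymm hx.2 (hqx'.trans hx'.2)
      rw [hxq, hgq] at hlt
      exact lt_irrefl _ hlt
  · simpa only [hgp, hgq] using intermediate_value_Icc hpq hg.continuousOn

theorem exists_Icc_subset_image_eq_of_surjOn_s18 (hg : Continuous g) {a b c d : ℝ} (hcd : c ≤ d)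
    (h : SurjOn g (Icc a b) (Icc c d)) :
    ∃ p q, p ≤ q ∧ Icc p q ⊆ Icc a b ∧ g '' Icc p q = Icc c d := by
  obtain ⟨x₁, hx₁, h₁⟩ := h (left_mem_Icc.2 hcd)
  obtain ⟨x₂, hx₂, h₂⟩ := h (right_mem_Icc.2 hcd)
  rcases le_total x₁ x₂ with hx | hx
  · obtain ⟨p, q, hx₁p, hpq, hqx₂, himg⟩ := exists_Icc_image_eq_of_le_s18 hg hx hcd h₁ h₂
    exact ⟨p, q, hpq, Icc_subset_Icc (hx₁.1.trans hx₁p) (hqx₂.trans hx₂.2), himg⟩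
  · obtain ⟨p, q, hx₁p, hpq, hqx₂, himg⟩ := exists_Icc_image_eq_of_le_s18 (hg.comp continuous_neg)
      (neg_le_neg hx) hcd (by simpa using h₁) (by simpa using h₂)
    refine ⟨-q, -p, neg_le_neg hpq,
      Icc_subset_Icc (by linarith [hx₂.1]) (by linarith [hx₁.2]), ?_⟩
    rwa [← image_neg_Icc, image_image]

end Covering

theorem exists_isPeriodicPt_of_surjOn_cycle_s18 {f : ℝ → ℝ} (hf : Continuous f) {K : ℕ}
    (hK : 0 < K) {A B : ℕ → ℝ} (hAB : ∀ i < K, A i ≤ B i)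
    (hcov : ∀ i, i + 1 < K → SurjOn f (Icc (A i) (B i)) (Icc (A (i + 1)) (B (i + 1))))
    (hclose : SurjOn f (Icc (A (K - 1)) (B (K - 1))) (Icc (A 0) (B 0))) :
    ∃ y, IsPeriodicPt f K y ∧ ∀ i < K, f^[i] y ∈ Icc (A i) (B i) := by
  have hnest : ∀ j < K, ∃ p q, p ≤ q ∧ (∀ i ≤ j, MapsTo f^[i] (Icc p q) (Icc (A i) (B i))) ∧
      f^[j] '' Icc p q = Icc (A j) (B j) := by
    intro j hj
    induction j with
    | zero =>
      refine ⟨A 0, B 0, hAB 0 hK, fun i hi => ?_, image_id _⟩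
      obtain rfl := Nat.le_zero.1 hi
      exact mapsTo_id _
    | succ j ih =>
      obtain ⟨p, q, -, hmaps, himg⟩ := ih (by omega)
      have hsurj : SurjOn f^[j + 1] (Icc p q) (Icc (A (j + 1)) (B (j + 1))) := by
        rw [SurjOn, iterate_succ', image_comp, himg]
        exact hcov j hj
      obtain ⟨p', q', hpq', hsub, himg'⟩ :=
        exists_Icc_subset_image_eq_of_surjOn_s18 (hf.iterate _) (hAB _ hj) hsurj
      refine ⟨p', q', hpq', fun i hi => ?_, himg'⟩
      rcases hi.lt_or_eq with hi | rfl
      · exact (hmaps i (by omega)).mono_left hsub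
      · exact himg' ▸ mapsTo_image _ _
  obtain ⟨p, q, hpq, hmaps, himg⟩ := hnest (K - 1) (by omega)
  have hsurj : SurjOn f^[K] (Icc p q) (Icc p q) := by
    obtain ⟨k, rfl⟩ : ∃ k, K = k + 1 := ⟨K - 1, by omega⟩
    rw [add_tsub_cancel_right] at himg hclose
    rw [SurjOn, iterate_succ', image_comp, himg]
    exact fun x hx => hclose (hmaps 0 (Nat.zero_le _) hx)
  obtain ⟨y, hy, hfix⟩ := exists_mem_Icc_isFixedPt_of_surjOn (hf.iterate _).continuousOn hpq hsurj
  exact ⟨y, hfix, fun i hi => hmaps i (by omega) hy⟩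

/-- The first alternative in `LType`, for the orbit `x`; injectivity follows from the ordering
(`IsLOrbit.injOn`). -/
structure IsLOrbit (f : ℝ → ℝ) (m n : ℕ) (x : ℕ → ℝ) : Prop where
  apply_eq : ∀ i < m + n, f (x i) = x ((i + 1) % (m + n))
  succ_lt_of_le : ∀ i, n ≤ i → i + 1 < m + n → x (i + 1) < x i
  lt_zero : x n < x 0
  lt_succ : ∀ i, i + 1 < n → x i < x (i + 1)

namespace IsLOrbit

variable {f : ℝ → ℝ} {m n : ℕ} {x : ℕ → ℝ}

theorem apply_of_succ_lt (hx : IsLOrbit f m n x) {i : ℕ} (hi : i + 1 < m + n) :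
    f (x i) = x (i + 1) := by
  rw [hx.apply_eq i (by omega), Nat.mod_eq_of_lt hi]

theorem apply_last (hx : IsLOrbit f m n x) (hmn : 0 < m + n) : f (x (m + n - 1)) = x 0 := by
  rw [hx.apply_eq _ (by omega), Nat.sub_add_cancel hmn, Nat.mod_self]

theorem strictMonoOn (hx : IsLOrbit f m n x) : StrictMonoOn x (Iio n) :=
  strictMonoOn_of_lt_succ ordConnected_Iio fun i _ _ hi => by
    simpa using hx.lt_succ i (by simpa using hi)

theorem strictAntiOn (hx : IsLOrbit f m n x) : StrictAntiOn x (Ico n (m + n)) :=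
  strictAntiOn_of_succ_lt ordConnected_Ico fun i _ hi hi' => by
    simp only [Order.succ_eq_add_one, mem_Ico] at hi hi' ⊢
    exact hx.succ_lt_of_le i hi.1 hi'.2

theorem injOn (hx : IsLOrbit f m n x) : InjOn x (Iio (m + n)) := by
  have hne : ∀ i j, i < j → j < m + n → x i ≠ x j := by
    intro i j hij hj
    by_cases hjn : j < n
    · exact (hx.strictMonoOn (hij.trans hjn) hjn hij).ne
    by_cases hni : n ≤ i
    · exact (hx.strictAntiOn ⟨hni, hij.trans hj⟩ ⟨hni.trans hij.le, hj⟩ hij).ne'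
    have hj_le : x j ≤ x n := hx.strictAntiOn.antitoneOn ⟨le_rfl, by omega⟩ ⟨by omega, hj⟩
      (by omega)
    have hi_ge : x 0 ≤ x i := hx.strictMonoOn.monotoneOn (by simp; omega) (by simp; omega)
      (Nat.zero_le i)
    exact (hj_le.trans_lt (hx.lt_zero.trans_le hi_ge)).ne'
  intro i hi j hj hij
  by_contra hne'
  rcases Nat.lt_or_gt_of_ne hne' with h | h
  · exact hne i j h hj hij
  · exact hne j i h hi hij.symm

theorem exists_fixedPt (hx : IsLOrbit f m n x) (hf : Continuous f) (hm : 2 ≤ m) (hn : 2 ≤ n) :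
    ∃ z, f z = z ∧ x n < z ∧ z < x 0 := by
  have hn' : f (x n) < x n := by
    rw [hx.apply_of_succ_lt (by omega)]
    exact hx.succ_lt_of_le n le_rfl (by omega)
  have h0 : x 0 < f (x 0) := by
    rw [hx.apply_of_succ_lt (by omega)]
    exact hx.lt_succ 0 (by omega)
  obtain ⟨z, hz, hfz⟩ := intermediate_value_Ioo hx.lt_zero.le (hf.sub continuous_id).continuousOn
    (show (0 : ℝ) ∈ Ioo (f (x n) - x n) (f (x 0) - x 0) from ⟨by simpa, by simpa⟩)
  exact ⟨z, sub_eq_zero.1 hfz, hz⟩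

end IsLOrbit

theorem lType_iff {f : ℝ → ℝ} {m n : ℕ} :
    LType f m n ↔ (∃ x, IsLOrbit f m n x) ∨ ∃ x, IsLOrbit (fun u => -f (-u)) m n x := by
  constructor
  · rintro ⟨x, hmap, -, ⟨hl, h0, hr⟩ | ⟨hl, h0, hr⟩⟩
    · exact .inl ⟨x, hmap, hl, h0, hr⟩
    · exact .inr ⟨fun i => -x i, fun i hi => by simp [hmap i hi],
        fun i h₁ h₂ => neg_lt_neg (hl i h₁ h₂), neg_lt_neg h0, fun i hi => neg_lt_neg (hr i hi)⟩
  · rintro (⟨x, hx⟩ | ⟨x, hx⟩)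
    · exact ⟨x, hx.apply_eq, fun i hi j hj => hx.injOn hi hj,
        .inl ⟨hx.succ_lt_of_le, hx.lt_zero, hx.lt_succ⟩⟩
    · refine ⟨fun i => -x i, fun i hi => by simp only [← hx.apply_eq i hi, neg_neg],
        fun i hi j hj h => hx.injOn hi hj (neg_inj.1 h), .inr ⟨?_, neg_lt_neg hx.lt_zero, ?_⟩⟩
      · exact fun i h₁ h₂ => neg_lt_neg (hx.succ_lt_of_le i h₁ h₂)
      · exact fun i hi => neg_lt_neg (hx.lt_succ i hi)

theorem exists_isPeriodicPt_of_surjOn_chains {f : ℝ → ℝ} (hf : Continuous f) {M N : ℕ}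
    (hM : 0 < M) (hN : 0 < N) {l r : ℕ → ℝ} (hl : ∀ j < M, l (j + 1) ≤ l j)
    (hr : ∀ i < N, r i ≤ r (i + 1))
    (hcov_l : ∀ j, j + 1 < M → SurjOn f (Icc (l (j + 1)) (l j)) (Icc (l (j + 2)) (l (j + 1))))
    (hcov_r : ∀ i, i + 1 < N → SurjOn f (Icc (r i) (r (i + 1))) (Icc (r (i + 1)) (r (i + 2))))
    (hcov_lr : SurjOn f (Icc (l M) (l (M - 1))) (Icc (r 0) (r 1)))
    (hcov_rl : SurjOn f (Icc (r (N - 1)) (r N)) (Icc (l 1) (l 0))) :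
    ∃ y, IsPeriodicPt f (M + N) y ∧ (∀ j < M, f^[N + j] y ∈ Icc (l (j + 1)) (l j)) ∧
      ∀ i < N, f^[i] y ∈ Icc (r i) (r (i + 1)) := by
  -- the loop runs through `[r i, r (i + 1)]` for `i < N`,
  -- then through `[l (j + 1), l j]` for `i = N + j`
  set A : ℕ → ℝ := fun i => if i < N then r i else l (i - N + 1)
  set B : ℕ → ℝ := fun i => if i < N then r (i + 1) else l (i - N)
  have hABr : ∀ i < N, A i = r i ∧ B i = r (i + 1) := fun i hi => by simp [A, B, hi]
  have hABl : ∀ j, A (N + j) = l (j + 1) ∧ B (N + j) = l j := fun j => by simp [A, B]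
  have hAB : ∀ i < M + N, A i ≤ B i := by
    intro i hi
    rcases lt_or_ge i N with hiN | hiN
    · rw [(hABr i hiN).1, (hABr i hiN).2]
      exact hr i hiN
    · obtain ⟨j, rfl⟩ := Nat.exists_eq_add_of_le hiN
      rw [(hABl j).1, (hABl j).2]
      exact hl j (by omega)
  have hcov : ∀ i, i + 1 < M + N →
      SurjOn f (Icc (A i) (B i)) (Icc (A (i + 1)) (B (i + 1))) := by
    intro i hi
    rcases lt_trichotomy (i + 1) N with hiN | rfl | hiN
    · rw [(hABr i (by omega)).1, (hABr i (by omega)).2, (hABr _ hiN).1, (hABr _ hiN).2]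
      exact hcov_r i hiN
    · obtain ⟨hA₀, hB₀⟩ := hABl 0
      rw [add_zero] at hA₀ hB₀
      rw [(hABr _ (by omega)).1, (hABr _ (by omega)).2, hA₀, hB₀]
      simpa using hcov_rl
    · obtain ⟨j, rfl⟩ := Nat.exists_eq_add_of_le (Nat.le_of_lt_succ hiN)
      rw [add_assoc, (hABl j).1, (hABl j).2, (hABl (j + 1)).1, (hABl (j + 1)).2]
      exact hcov_l j (by omega)
  have hclose : SurjOn f (Icc (A (M + N - 1)) (B (M + N - 1))) (Icc (A 0) (B 0)) := by
    obtain ⟨j, rfl⟩ : ∃ j, M = j + 1 := ⟨M - 1, by omega⟩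
    rw [show j + 1 + N - 1 = N + j by omega, (hABl _).1, (hABl _).2,
      (hABr 0 (by omega)).1, (hABr 0 (by omega)).2]
    simpa using hcov_lr
  obtain ⟨y, hy, hmem⟩ := exists_isPeriodicPt_of_surjOn_cycle_s18 hf (by omega) hAB hcov hclose
  refine ⟨y, hy, fun j hj => ?_, fun i hi => ?_⟩
  · rw [← (hABl j).1, ← (hABl j).2]
    exact hmem _ (by omega)
  · rw [← (hABr i hi).1, ← (hABr i hi).2]
    exact hmem i (by omega)

theorem isLOrbit_iterate_of_mem_chains {f : ℝ → ℝ} {M N : ℕ} (hM : 0 < M) (hN : 1 < N) {z : ℝ}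
    (hz : f z = z) {l r : ℕ → ℝ} (hl0 : l 0 = z) (hr0 : r 0 = z) (hr01 : r 0 < r 1) {y : ℝ}
    (hy : IsPeriodicPt f (M + N) y) (hmem_l : ∀ j < M, f^[N + j] y ∈ Icc (l (j + 1)) (l j))
    (hmem_r : ∀ i < N, f^[i] y ∈ Icc (r i) (r (i + 1))) :
    IsLOrbit f M N (fun i => f^[i] y) := by
  -- `y` is not fixed, since `f y ≥ r 1 > z ≥ f^[N] y`; hence no point of its orbit is fixed
  have hy_not_fixed : ¬ IsFixedPt f y := by
    intro hfix
    have h₁ := (hmem_r 1 hN).1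
    have h₂ := (hmem_l 0 hM).2
    rw [iterate_fixed hfix] at h₁ h₂
    linarith
  have hnot_fixed : ∀ i, ¬ IsFixedPt f (f^[i] y) := fun i hfix => hy_not_fixed <|
    minimalPeriod_eq_one_iff_isFixedPt.1 <|
      (minimalPeriod_apply_iterate (mk_mem_periodicPts (by omega) hy) i).symm.trans
        (minimalPeriod_eq_one_iff_isFixedPt.2 hfix)
  have hne_succ : ∀ i, f^[i] y ≠ f^[i + 1] y := fun i h =>
    hnot_fixed i ((iterate_succ_apply' f i y).symm.trans h.symm)
  refine ⟨fun i _ => ?_, fun i hNi hi => ?_, ?_, fun i hi => ?_⟩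
  · rw [hy.iterate_mod_apply, iterate_succ_apply']
  · obtain ⟨j, rfl⟩ := Nat.exists_eq_add_of_le hNi
    exact lt_of_le_of_ne ((hmem_l (j + 1) (by omega)).2.trans (hmem_l j (by omega)).1)
      (hne_succ _).symm
  · have hzy : z < y := lt_of_le_of_ne (hr0 ▸ (hmem_r 0 (by omega)).1)
      fun h => hy_not_fixed (h ▸ hz)
    exact ((hmem_l 0 hM).2.trans_eq hl0).trans_lt hzy
  · exact lt_of_le_of_ne ((hmem_r i (by omega)).2.trans (hmem_r (i + 1) hi).1) (hne_succ i)

theorem exists_isLOrbit_of_chains {f : ℝ → ℝ} (hf : Continuous f) {M N : ℕ} (hM : 2 ≤ M)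
    (hN : 2 ≤ N) {z : ℝ} (hz : f z = z) {l r : ℕ → ℝ} (hl0 : l 0 = z) (hr0 : r 0 = z)
    (hl : ∀ j < M, l (j + 1) < l j) (hr : ∀ i < N, r i < r (i + 1))
    (hfl : ∀ j, j + 1 < M → f (l (j + 1)) = l (j + 2))
    (hfr : ∀ i, i + 1 < N → f (r (i + 1)) = r (i + 2))
    (hlr : r 1 ≤ f (l M)) (hrl : f (r N) ≤ l 1) :
    ∃ x, IsLOrbit f M N x := by
  have hl_anti : StrictAntiOn l (Iic M) :=
    strictAntiOn_of_succ_lt ordConnected_Iic fun j _ _ hj => by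
      simpa using hl j (by simpa using hj)
  have hr_mono : StrictMonoOn r (Iic N) :=
    strictMonoOn_of_lt_succ ordConnected_Iic fun i _ _ hi => by
      simpa using hr i (by simpa using hi)
  have hcov_l : ∀ j, j + 1 < M →
      SurjOn f (Icc (l (j + 1)) (l j)) (Icc (l (j + 2)) (l (j + 1))) := by
    intro j hj
    refine surjOn_Icc_of_le hf.continuousOn (hl j (by omega)).le (hfl j hj).le ?_
    rcases j with _ | j
    · rw [hl0, hz, ← hl0]
      exact (hl 0 (by omega)).le
    · exact (hfl j (by omega)).ge
  have hcov_r : ∀ i, i + 1 < N →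
      SurjOn f (Icc (r i) (r (i + 1))) (Icc (r (i + 1)) (r (i + 2))) := by
    intro i hi
    refine surjOn_Icc_of_le hf.continuousOn (hr i (by omega)).le ?_ (hfr i hi).ge
    rcases i with _ | i
    · rw [hr0, hz, ← hr0]
      exact (hr 0 (by omega)).le
    · exact (hfr i (by omega)).le
  have hcov_lr : SurjOn f (Icc (l M) (l (M - 1))) (Icc (r 0) (r 1)) := by
    obtain ⟨j, rfl⟩ : ∃ j, M = j + 2 := ⟨M - 2, by omega⟩
    refine surjOn_Icc_of_ge hf.continuousOn (hl _ (by omega)).le hlr ?_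
    rw [show j + 2 - 1 = j + 1 by omega, hfl j (by omega), hr0, ← hl0]
    exact (hl_anti (by simp) (by simp) (by omega)).le
  have hcov_rl : SurjOn f (Icc (r (N - 1)) (r N)) (Icc (l 1) (l 0)) := by
    obtain ⟨i, rfl⟩ : ∃ i, N = i + 2 := ⟨N - 2, by omega⟩
    refine surjOn_Icc_of_ge hf.continuousOn (hr _ (by omega)).le ?_ hrl
    rw [show i + 2 - 1 = i + 1 by omega, hfr i (by omega), hl0, ← hr0]
    exact (hr_mono (by simp) (by simp) (by omega)).le
  obtain ⟨y, hy, hmem_l, hmem_r⟩ := exists_isPeriodicPt_of_surjOn_chains hf (by omega) (by omega)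
    (fun j hj => (hl j hj).le) (fun i hi => (hr i hi).le) hcov_l hcov_r hcov_lr hcov_rl
  exact ⟨_, isLOrbit_iterate_of_mem_chains (by omega) (by omega) hz hl0 hr0 (hr 0 (by omega)) hy
    hmem_l hmem_r⟩

namespace IsLOrbit

variable {f : ℝ → ℝ} {m n : ℕ} {x : ℕ → ℝ}

theorem exists_succ_right (hx : IsLOrbit f m n x) (hf : Continuous f) (hm : 2 ≤ m)
    (hn : 2 ≤ n) : ∃ y, IsLOrbit f m (n + 1) y := by
  obtain ⟨z, hz, hxz, hzx⟩ := hx.exists_fixedPt hf hm hn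
  have hx01 : x 0 < f (x 0) := by
    rw [hx.apply_of_succ_lt (by omega)]
    exact hx.lt_succ 0 (by omega)
  obtain ⟨w, ⟨hzw, hwx⟩, hfw⟩ := intermediate_value_Ioo hzx.le hf.continuousOn
    (show x 0 ∈ Ioo (f z) (f (x 0)) by rw [hz]; exact ⟨hzx, hx01⟩)
  refine exists_isLOrbit_of_chains hf hm (by omega) hz (l := fun | 0 => z | j + 1 => x (n + j))
    (r := fun | 0 => z | 1 => w | i + 2 => x i) rfl rfl ?_ ?_ ?_ ?_ ?_ ?_
  · rintro (_ | j) hj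
    · exact hxz
    · exact hx.succ_lt_of_le (n + j) (by omega) (by omega)
  · rintro (_ | _ | i) hi
    · exact hzw
    · exact hwx
    · exact hx.lt_succ i (by omega)
  · intro j hj
    exact hx.apply_of_succ_lt (by omega)
  · rintro (_ | i) hi
    · exact hfw
    · exact hx.apply_of_succ_lt (by omega)
  · obtain ⟨j, rfl⟩ : ∃ j, m = j + 1 := ⟨m - 1, by omega⟩
    show w ≤ f (x (n + j))
    rw [show n + j = j + 1 + n - 1 by omega, hx.apply_last (by omega)]
    exact hwx.le
  · obtain ⟨i, rfl⟩ : ∃ i, n = i + 1 := ⟨n - 1, by omega⟩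
    exact (hx.apply_of_succ_lt (by omega)).le

theorem exists_succ_left (hx : IsLOrbit f m n x) (hf : Continuous f) (hm : 2 ≤ m)
    (hn : 2 ≤ n) : ∃ y, IsLOrbit f (m + 1) n y := by
  obtain ⟨z, hz, hxz, hzx⟩ := hx.exists_fixedPt hf hm hn
  have hxn : f (x n) < x n := by
    rw [hx.apply_of_succ_lt (by omega)]
    exact hx.succ_lt_of_le n le_rfl (by omega)
  obtain ⟨v, ⟨hxv, hvz⟩, hfv⟩ := intermediate_value_Ioo hxz.le hf.continuousOn
    (show x n ∈ Ioo (f (x n)) (f z) by rw [hz]; exact ⟨hxn, hxz⟩)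
  refine exists_isLOrbit_of_chains hf (by omega) hn hz
    (l := fun | 0 => z | 1 => v | j + 2 => x (n + j)) (r := fun | 0 => z | i + 1 => x i)
    rfl rfl ?_ ?_ ?_ ?_ ?_ ?_
  · rintro (_ | _ | j) hj
    · exact hvz
    · exact hxv
    · exact hx.succ_lt_of_le (n + j) (by omega) (by omega)
  · rintro (_ | i) hi
    · exact hzx
    · exact hx.lt_succ i (by omega)
  · rintro (_ | j) hj
    · exact hfv
    · exact hx.apply_of_succ_lt (by omega)
  · intro i hi
    exact hx.apply_of_succ_lt (by omega)
  · obtain ⟨j, rfl⟩ : ∃ j, m = j + 1 := ⟨m - 1, by omega⟩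
    show x 0 ≤ f (x (n + j))
    rw [show n + j = j + 1 + n - 1 by omega, hx.apply_last (by omega)]
  · obtain ⟨i, rfl⟩ : ∃ i, n = i + 1 := ⟨n - 1, by omega⟩
    show f (x i) ≤ v
    rw [hx.apply_of_succ_lt (by omega)]
    exact hxv.le

theorem exists_of_le (hx : IsLOrbit f m n x) (hf : Continuous f) (hm : 2 ≤ m) (hn : 2 ≤ n)
    {m' n' : ℕ} (hmm' : m ≤ m') (hnn' : n ≤ n') : ∃ y, IsLOrbit f m' n' y := by
  have hright : ∃ y, IsLOrbit f m n' y := by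
    induction n', hnn' using Nat.le_induction with
    | base => exact ⟨x, hx⟩
    | succ k hnk ih =>
      obtain ⟨y, hy⟩ := ih
      exact hy.exists_succ_right hf hm (hn.trans hnk)
  induction m', hmm' using Nat.le_induction with
  | base => exact hright
  | succ k hmk ih =>
    obtain ⟨y, hy⟩ := ih
    exact hy.exists_succ_left hf (hm.trans hmk) (hn.trans hnn')

end IsLOrbit

theorem stmt_18 (f : ℝ → ℝ) (hf : Continuous f) (m n : ℕ) (hm : 2 ≤ m) (hn : 2 ≤ n)
    (h : LType f m n) :
    ∀ m' n', m ≤ m' → n ≤ n' → LType f m' n' := by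
  intro m' n' hmm' hnn'
  rw [lType_iff] at h ⊢
  rcases h with ⟨x, hx⟩ | ⟨x, hx⟩
  · exact .inl (hx.exists_of_le hf hm hn hmm' hnn')
  · exact .inr (hx.exists_of_le (by fun_prop) hm hn hmm' hnn')
end
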